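/- (Lemma 2a, transfer of global optimisers under global rescaling.) With the notation of the sparse matching objective E, suppose (P, X̂, Ŷ) is a global minimiser of (P', X̂', Ŷ') ↦ E(X, Y, Δ_X, Δ_Y, h_X, h_Y, d_X, d_Y; P', X̂', Ŷ') over all permutation matrices P' ∈ {0,1}^{n×n} with P'𝟏ₙ = 𝟏ₙ, P'ᵀ𝟏ₙ = 𝟏ₙ and all X̂' ∈ ℝ^{M×3}, Ŷ' ∈ ℝ^{N×3}. Let s > 0, set X' := sX with PLBO Δ_X' := Π((sX|𝟏))ᵀL_XΠ((sX|𝟏)). Then (P, X̂, s·Ŷ) is a global minimiser of (P', X̂', Ŷ') ↦ E(sX, Y, Δ_X', Δ_Y, h_X, h_Y, s·d_X, d_Y; P', X̂', Ŷ') over the same feasible set. -/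

import Mathlib

/-!
Scaling `X` by `s` multiplies the homogeneous coordinates on the right by the invertible matrix
`diag(s, s, s, 1)`, which leaves `Π(X̃)` and hence the PLBO unchanged. In the rescaled objective
every term containing `X` or `Ŷ` is divided by `s · d_X`, so the substitution `Ŷ ↦ s • Ŷ`
identifies it with the original objective; minimisers therefore correspond.
-/

open Matrix

/-- The projection matrix `Π(A) := I − A (AᵀA)⁻¹ Aᵀ`. -/
noncomputable def gramProj {m n : Type*} [Fintype m] [Fintype n] [DecidableEq m]
    [DecidableEq n] (A : Matrix m n ℝ) : Matrix m m ℝ :=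
  1 - A * (Aᵀ * A)⁻¹ * Aᵀ

/-- Homogeneous coordinates: append an all-ones column to the coordinate matrix. -/
noncomputable def homog {m : ℕ} (X : Matrix (Fin m) (Fin 3) ℝ) :
    Matrix (Fin m) (Fin 3 ⊕ Fin 1) ℝ :=
  Matrix.fromCols X (Matrix.of fun _ _ => (1 : ℝ))

/-- The projected Laplace–Beltrami operator built from a stiffness matrix `L`:
`Δ_proj := Π(Z̃)ᵀ L Π(Z̃)`. -/
noncomputable def plbo {m : ℕ} (Z : Matrix (Fin m) (Fin 3) ℝ)
    (L : Matrix (Fin m) (Fin m) ℝ) : Matrix (Fin m) (Fin m) ℝ :=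
  (gramProj (homog Z))ᵀ * L * gramProj (homog Z)

/-- The Frobenius norm of a real matrix. -/
noncomputable def frobNorm {m n : ℕ} (A : Matrix (Fin m) (Fin n) ℝ) : ℝ :=
  Real.sqrt (∑ i, ∑ j, (A i j) ^ 2)

/-- The Euclidean norm of a real vector. -/
noncomputable def vnorm {n : ℕ} (v : Fin n → ℝ) : ℝ :=
  Real.sqrt (∑ i, (v i) ^ 2)

/-- The sparse matching objective `E` of the paper. -/
noncomputable def objE {n M N : ℕ} (lamDef lamOri : ℝ)
    (ι : Fin n → Fin M) (κ : Fin n → Fin N)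
    (X : Matrix (Fin M) (Fin 3) ℝ) (Y : Matrix (Fin N) (Fin 3) ℝ)
    (ΔX : Matrix (Fin M) (Fin M) ℝ) (ΔY : Matrix (Fin N) (Fin N) ℝ)
    (hX hY : Fin n → ℝ) (dX dY : ℝ)
    (P : Matrix (Fin n) (Fin n) ℝ)
    (Xh : Matrix (Fin M) (Fin 3) ℝ) (Yh : Matrix (Fin N) (Fin 3) ℝ) : ℝ :=
  (1 / (n * dY)) * frobNorm (Xh.submatrix ι id - P * Y.submatrix κ id)
    + (1 / (n * dX)) * frobNorm (Yh.submatrix κ id - Pᵀ * X.submatrix ι id)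
    + lamDef * ((1 / (M * dY)) * frobNorm (ΔX * Xh)
        + (1 / (N * dX)) * frobNorm (ΔY * Yh))
    + (lamOri / n) * vnorm (hX - P *ᵥ hY)

/-- `P` is a permutation matrix: entries in `{0,1}` and all row and column sums equal `1`. -/
def IsPermMat {n : ℕ} (P : Matrix (Fin n) (Fin n) ℝ) : Prop :=
  (∀ i j, P i j = 0 ∨ P i j = 1) ∧
    P *ᵥ (1 : Fin n → ℝ) = 1 ∧ Pᵀ *ᵥ (1 : Fin n → ℝ) = 1

lemma gramProj_mul_of_isUnit {m p : Type*} [Fintype m] [Fintype p] [DecidableEq m]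
    [DecidableEq p] (A : Matrix m p ℝ) {D : Matrix p p ℝ} (hD : IsUnit D) :
    gramProj (A * D) = gramProj A := by
  have hdet : IsUnit D.det := (isUnit_iff_isUnit_det D).mp hD
  have hdetT : IsUnit Dᵀ.det := by rwa [det_transpose]
  have hinv : ((A * D)ᵀ * (A * D))⁻¹ = D⁻¹ * ((Aᵀ * A)⁻¹ * Dᵀ⁻¹) := by
    have hgram : (A * D)ᵀ * (A * D) = Dᵀ * (Aᵀ * A) * D := by
      simp only [transpose_mul, Matrix.mul_assoc]
    rw [hgram, Matrix.mul_inv_rev, Matrix.mul_inv_rev]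
  calc gramProj (A * D)
      = 1 - A * (D * D⁻¹) * ((Aᵀ * A)⁻¹ * ((Dᵀ⁻¹ * Dᵀ) * Aᵀ)) := by
        rw [gramProj, hinv, transpose_mul]
        simp only [Matrix.mul_assoc]
    _ = gramProj A := by
        rw [mul_nonsing_inv D hdet, nonsing_inv_mul Dᵀ hdetT, gramProj]
        simp only [Matrix.mul_one, Matrix.one_mul, Matrix.mul_assoc]

noncomputable def homogScale (s : ℝ) : Matrix (Fin 3 ⊕ Fin 1) (Fin 3 ⊕ Fin 1) ℝ :=
  fromBlocks (s • 1) 0 0 1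

lemma isUnit_homogScale {s : ℝ} (hs : s ≠ 0) : IsUnit (homogScale s) := by
  rw [homogScale, isUnit_iff_isUnit_det, det_fromBlocks_zero₂₁]
  simp [hs]

lemma homog_smul {m : ℕ} (X : Matrix (Fin m) (Fin 3) ℝ) (s : ℝ) :
    homog (s • X) = homog X * homogScale s := by
  rw [homog, homog, homogScale, fromCols_mul_fromBlocks]
  simp

lemma plbo_smul {m : ℕ} (X : Matrix (Fin m) (Fin 3) ℝ) (L : Matrix (Fin m) (Fin m) ℝ)
    {s : ℝ} (hs : s ≠ 0) : plbo (s • X) L = plbo X L := by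
  rw [plbo, plbo, homog_smul, gramProj_mul_of_isUnit _ (isUnit_homogScale hs)]

lemma frobNorm_smul {m k : ℕ} (c : ℝ) (A : Matrix (Fin m) (Fin k) ℝ) :
    frobNorm (c • A) = |c| * frobNorm A := by
  have hsum : ∑ i, ∑ j, ((c • A) i j) ^ 2 = c ^ 2 * ∑ i, ∑ j, (A i j) ^ 2 := by
    simp [Finset.mul_sum, mul_pow]
  rw [frobNorm, frobNorm, hsum, Real.sqrt_mul (sq_nonneg c), Real.sqrt_sq_eq_abs]

lemma one_div_mul_frobNorm_smul {m k : ℕ} (a d : ℝ) {s : ℝ} (hs : 0 < s)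
    (A : Matrix (Fin m) (Fin k) ℝ) :
    1 / (a * (s * d)) * frobNorm (s • A) = 1 / (a * d) * frobNorm A := by
  rw [frobNorm_smul, abs_of_pos hs, show 1 / (a * (s * d)) = s⁻¹ * (1 / (a * d)) by ring,
    mul_mul_mul_comm, inv_mul_cancel₀ hs.ne', one_mul]

lemma objE_smul {n M N : ℕ} (lamDef lamOri : ℝ) (ι : Fin n → Fin M) (κ : Fin n → Fin N)
    (X : Matrix (Fin M) (Fin 3) ℝ) (Y : Matrix (Fin N) (Fin 3) ℝ)
    (LX : Matrix (Fin M) (Fin M) ℝ) (ΔY : Matrix (Fin N) (Fin N) ℝ)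
    (hX hY : Fin n → ℝ) (dX dY : ℝ) {s : ℝ} (hs : 0 < s) (P : Matrix (Fin n) (Fin n) ℝ)
    (Xh : Matrix (Fin M) (Fin 3) ℝ) (Yh : Matrix (Fin N) (Fin 3) ℝ) :
    objE lamDef lamOri ι κ (s • X) Y (plbo (s • X) LX) ΔY hX hY (s * dX) dY P Xh (s • Yh) =
      objE lamDef lamOri ι κ X Y (plbo X LX) ΔY hX hY dX dY P Xh Yh := by
  have hcross : (s • Yh).submatrix κ id - Pᵀ * (s • X).submatrix ι id =
      s • (Yh.submatrix κ id - Pᵀ * X.submatrix ι id) := by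
    rw [smul_sub, ← Matrix.mul_smul]
    rfl
  rw [objE, objE, plbo_smul X LX hs.ne', hcross, Matrix.mul_smul,
    one_div_mul_frobNorm_smul _ _ hs, one_div_mul_frobNorm_smul _ _ hs]

theorem stmt16_general {n M N : ℕ}
    (X : Matrix (Fin M) (Fin 3) ℝ) (Y : Matrix (Fin N) (Fin 3) ℝ)
    (ι : Fin n → Fin M) (κ : Fin n → Fin N)
    (LX : Matrix (Fin M) (Fin M) ℝ) (LY : Matrix (Fin N) (Fin N) ℝ)
    (hX hY : Fin n → ℝ) (dX dY : ℝ)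
    (lamDef lamOri : ℝ)
    (s : ℝ) (hs : 0 < s)
    (P : Matrix (Fin n) (Fin n) ℝ)
    (Xh : Matrix (Fin M) (Fin 3) ℝ) (Yh : Matrix (Fin N) (Fin 3) ℝ)
    (hmin : ∀ (P' : Matrix (Fin n) (Fin n) ℝ) (Xh' : Matrix (Fin M) (Fin 3) ℝ)
        (Yh' : Matrix (Fin N) (Fin 3) ℝ), IsPermMat P' →
        objE lamDef lamOri ι κ X Y (plbo X LX) (plbo Y LY) hX hY dX dY P Xh Yh ≤
          objE lamDef lamOri ι κ X Y (plbo X LX) (plbo Y LY) hX hY dX dY P' Xh' Yh') :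
    ∀ (P' : Matrix (Fin n) (Fin n) ℝ) (Xh' : Matrix (Fin M) (Fin 3) ℝ)
      (Yh' : Matrix (Fin N) (Fin 3) ℝ), IsPermMat P' →
      objE lamDef lamOri ι κ (s • X) Y (plbo (s • X) LX) (plbo Y LY)
          hX hY (s * dX) dY P Xh (s • Yh) ≤
        objE lamDef lamOri ι κ (s • X) Y (plbo (s • X) LX) (plbo Y LY)
          hX hY (s * dX) dY P' Xh' Yh' := by
  intro P' Xh' Yh' hP'
  have h := hmin P' Xh' (s⁻¹ • Yh') hP'
  rwa [← objE_smul _ _ _ _ X Y LX _ hX hY dX dY hs P Xh Yh,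
    ← objE_smul _ _ _ _ X Y LX _ hX hY dX dY hs P' Xh', smul_inv_smul₀ hs.ne'] at h

theorem stmt16 {n M N : ℕ}
    (X : Matrix (Fin M) (Fin 3) ℝ) (Y : Matrix (Fin N) (Fin 3) ℝ)
    (hgX : IsUnit ((homog X)ᵀ * homog X)) (hgY : IsUnit ((homog Y)ᵀ * homog Y))
    (ι : Fin n → Fin M) (κ : Fin n → Fin N)
    (LX : Matrix (Fin M) (Fin M) ℝ) (LY : Matrix (Fin N) (Fin N) ℝ)
    (hX hY : Fin n → ℝ) (dX dY : ℝ) (hdX : 0 < dX) (hdY : 0 < dY)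
    (lamDef lamOri : ℝ) (hld : 0 ≤ lamDef) (hlo : 0 ≤ lamOri)
    (s : ℝ) (hs : 0 < s)
    (P : Matrix (Fin n) (Fin n) ℝ)
    (Xh : Matrix (Fin M) (Fin 3) ℝ) (Yh : Matrix (Fin N) (Fin 3) ℝ)
    (hPfeas : IsPermMat P)
    (hmin : ∀ (P' : Matrix (Fin n) (Fin n) ℝ) (Xh' : Matrix (Fin M) (Fin 3) ℝ)
        (Yh' : Matrix (Fin N) (Fin 3) ℝ), IsPermMat P' →
        objE lamDef lamOri ι κ X Y (plbo X LX) (plbo Y LY) hX hY dX dY P Xh Yh ≤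
          objE lamDef lamOri ι κ X Y (plbo X LX) (plbo Y LY) hX hY dX dY P' Xh' Yh') :
    ∀ (P' : Matrix (Fin n) (Fin n) ℝ) (Xh' : Matrix (Fin M) (Fin 3) ℝ)
      (Yh' : Matrix (Fin N) (Fin 3) ℝ), IsPermMat P' →
      objE lamDef lamOri ι κ (s • X) Y (plbo (s • X) LX) (plbo Y LY)
          hX hY (s * dX) dY P Xh (s • Yh) ≤
        objE lamDef lamOri ι κ (s • X) Y (plbo (s • X) LX) (plbo Y LY)
          hX hY (s * dX) dY P' Xh' Yh' :=
  stmt16_general X Y ι κ LX LY hX hY dX dY lamDef lamOri s hs P Xh Yh hmin
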